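/- Let a be an elliptic polynomial of degree d with coefficients in ℤ_p, let β > 0, let T > 0, and let μ be a regular Borel measure on ℚ_p^N. Then ∫₀^T ∫_{ℚ_p^N} e^{−2t|a(ξ)|_p^β} dμ(ξ) dt < +∞ if and only if ∫_{ℚ_p^N} max(1,‖ξ‖_p)^{−dβ} dμ(ξ) < +∞. (Note that e^{−t|a(ξ)|_p^β} is the Fourier transform of the heat kernel Γ(t,·).) -/

import Mathlib

open MeasureTheory Complex Filter

section Preamble

variable (p : ℕ) [Fact p.Prime]

open Classical in
/-- The `p`-adic fractional part `{y}_p ∈ ℚ` of `y ∈ ℚ_p`. -/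
noncomputable def padicFrac (y : ℚ_[p]) : ℚ :=
  if h : ∃ n : ℕ, ‖y * (p : ℚ_[p]) ^ n‖ ≤ 1 then
    (PadicInt.appr (⟨y * (p : ℚ_[p]) ^ Nat.find h, Nat.find_spec h⟩ : ℤ_[p]) (Nat.find h) : ℚ)
      / (p : ℚ) ^ (Nat.find h)
  else 0

/-- The standard additive character `χ_p(y) = exp(2 π i {y}_p)` of `ℚ_p`. -/
noncomputable def padicChar (y : ℚ_[p]) : ℂ :=
  Complex.exp (2 * Real.pi * Complex.I * (padicFrac p y : ℂ))

noncomputable instance : MeasurableSpace ℚ_[p] := borel _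
instance : BorelSpace ℚ_[p] := ⟨rfl⟩

variable (N : ℕ)

/-- The Haar measure `d^N x` on `ℚ_p^N`, normalized so that `ℤ_p^N` (the closed unit
ball) has measure `1`. -/
noncomputable def QpHaar : Measure (Fin N → ℚ_[p]) :=
  Measure.addHaarMeasure
    ⟨⟨Metric.closedBall 0 1, isCompact_closedBall 0 1⟩,
      Set.Nonempty.mono Metric.ball_subset_interior_closedBall
        (Metric.nonempty_ball.mpr one_pos)⟩

/-- The Fourier transform `Ff(ξ) = ∫ χ_p(-ξ·x) f(x) d^N x` on `ℚ_p^N`. -/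
noncomputable def QpFT (f : (Fin N → ℚ_[p]) → ℂ) (ξ : Fin N → ℚ_[p]) : ℂ :=
  ∫ x, padicChar p (-(∑ j, ξ j * x j)) * f x ∂(QpHaar p N)

/-- Evaluation at `ξ ∈ ℚ_p^N` of a polynomial with coefficients in `ℤ_p`. -/
noncomputable def evalPoly (a : MvPolynomial (Fin N) ℤ_[p]) (ξ : Fin N → ℚ_[p]) : ℚ_[p] :=
  MvPolynomial.eval ξ (MvPolynomial.map (PadicInt.Coe.ringHom (p := p)) a)

/-- `a` is an elliptic polynomial of degree `d`: homogeneous of degree `d` and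
`a(ξ) = 0 ↔ ξ = 0`. -/
def IsElliptic (a : MvPolynomial (Fin N) ℤ_[p]) (d : ℕ) : Prop :=
  0 < d ∧ MvPolynomial.IsHomogeneous a d ∧
    ∀ ξ : Fin N → ℚ_[p], evalPoly p N a ξ = 0 ↔ ξ = 0

/-- The `p`-adic heat kernel `Γ(t,x) = ∫ χ_p(x·ξ) e^{-t |a(ξ)|_p^β} d^N ξ`. -/
noncomputable def heatKer (a : MvPolynomial (Fin N) ℤ_[p]) (β t : ℝ)
    (x : Fin N → ℚ_[p]) : ℂ :=
  ∫ ξ, padicChar p (∑ j, x j * ξ j) *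
    (Real.exp (-(t * ‖evalPoly p N a ξ‖ ^ β)) : ℝ) ∂(QpHaar p N)

/-- Bruhat--Schwartz test functions: locally constant with compact support. -/
def IsTestFn (f : (Fin N → ℚ_[p]) → ℂ) : Prop :=
  IsLocallyConstant f ∧ HasCompactSupport f

/-- The Bruhat--Schwartz space `D(ℚ_p^N)` as a `ℂ`-subspace of all functions. -/
noncomputable def BSspace : Submodule ℂ ((Fin N → ℚ_[p]) → ℂ) where
  carrier := {f | IsLocallyConstant f ∧ HasCompactSupport f}
  add_mem' hf hg := ⟨hf.1.add hg.1, hf.2.add hg.2⟩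
  zero_mem' := ⟨IsLocallyConstant.const 0, by
    simp [HasCompactSupport, tsupport, Function.support, isCompact_empty]⟩
  smul_mem' c f hf := by
    refine ⟨?_, ?_⟩
    · show IsLocallyConstant fun x => c • f x
      exact hf.1.comp (c • ·)
    · show HasCompactSupport fun x => c • f x
      exact hf.2.comp_left (g := (c • ·)) (smul_zero c)

open Classical in
/-- The pairing of a distribution `F ∈ D'(ℚ_p^N)` with a function which is
(known to be) a test function. -/
noncomputable def pairingD (F : BSspace p N →ₗ[ℂ] ℂ) (g : (Fin N → ℚ_[p]) → ℂ) : ℂ :=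
  if h : IsTestFn p N g then F ⟨g, h⟩ else 0

/-- Convolution `(f ∗ g)(x) = ∫ f(y) g(x − y) d^N y` on `ℚ_p^N`. -/
noncomputable def QpConv (f g : (Fin N → ℚ_[p]) → ℂ) (x : Fin N → ℚ_[p]) : ℂ :=
  ∫ y, f y * g (x - y) ∂(QpHaar p N)

open Classical in
/-- The Bessel potential `K_α` on `ℚ_p^N`. -/
noncomputable def besselK (α : ℝ) (x : Fin N → ℚ_[p]) : ℝ :=
  if x = 0 then 0
  else if ‖x‖ ≤ 1 then
    if α = N then (1 - (p : ℝ) ^ (-(N : ℝ))) * Real.logb p ((p : ℝ) / ‖x‖)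
    else ((1 - (p : ℝ) ^ (-α)) / (1 - (p : ℝ) ^ (α - (N : ℝ)))) *
      (‖x‖ ^ (α - (N : ℝ)) - (p : ℝ) ^ (α - (N : ℝ)))
  else 0

/-- `I₀(t,x) = (Γ(t)∗u₀)(x)` for `t > 0`, and `I₀(0,x) = u₀(x)`. -/
noncomputable def I0 (a : MvPolynomial (Fin N) ℤ_[p]) (β : ℝ) (u₀ : (Fin N → ℚ_[p]) → ℝ)
    (t : ℝ) (x : Fin N → ℚ_[p]) : ℂ :=
  if t = 0 then (u₀ x : ℂ)
  else ∫ y, heatKer p N a β t (x - y) * (u₀ y : ℂ) ∂(QpHaar p N)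

/-- The Hilbert space `U`: the completion of `D_ℝ(ℚ_p^N)` with respect to the
semi-inner product `⟨φ,ψ⟩_U = ∫ Fφ conj(Fψ) dμ`, realized concretely as the closure
in `L²(μ;ℂ)` of the space of Fourier transforms of real-valued test functions. -/
noncomputable def Uspace (μ : Measure (Fin N → ℚ_[p])) : Submodule ℝ (Lp ℂ 2 μ) :=
  (Submodule.span ℝ {g : Lp ℂ 2 μ | ∃ φ : (Fin N → ℚ_[p]) → ℝ,
      IsLocallyConstant φ ∧ HasCompactSupport φ ∧
      (g : (Fin N → ℚ_[p]) → ℂ) =ᵐ[μ] QpFT p N fun x => (φ x : ℂ)}).topologicalClosure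

end Preamble

/-!
Uniformly in `s ≥ 0`, the time integral `∫₀^T e^{-st} dt` is comparable to `1 / max(1, s)`:
it is at most `min(T, 1/s)`, and at least `τ e^{-1}` for `τ = min(T, 1) / max(1, s)`, where
`sτ ≤ 1`. By homogeneity and compactness of the unit sphere, `|a(ξ)|_p` is comparable to
`‖ξ‖_p^d`. So after exchanging the integrals by Tonelli, the integrand in `ξ` is bounded above
and below by constant multiples of `max(1, ‖ξ‖_p)^{-dβ}`.
-/

open Set
open scoped ENNReal

theorem lintegral_lt_top_iff_of_le_mul {α : Type*} [MeasurableSpace α] {μ : Measure α}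
    {f g : α → ℝ≥0∞} {c C : ℝ≥0∞} (hc : c ≠ 0) (hC : C ≠ ∞)
    (hgf : ∀ x, c * g x ≤ f x) (hfg : ∀ x, f x ≤ C * g x) :
    ∫⁻ x, f x ∂μ < ∞ ↔ ∫⁻ x, g x ∂μ < ∞ := by
  refine ⟨fun hf => ?_, fun hg => ?_⟩
  · refine ENNReal.lt_top_of_mul_ne_top_right ?_ hc
    exact ((lintegral_const_mul_le c g).trans (lintegral_mono hgf)).trans_lt hf |>.ne
  · calc ∫⁻ x, f x ∂μ ≤ ∫⁻ x, C * g x ∂μ := lintegral_mono hfg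
      _ = C * ∫⁻ x, g x ∂μ := lintegral_const_mul' C g hC
      _ < ∞ := ENNReal.mul_lt_top hC.lt_top hg

theorem lintegral_Ioc_exp_neg_mul_le_inv {s : ℝ} (hs : 0 < s) (T : ℝ) :
    ∫⁻ t in Ioc 0 T, ENNReal.ofReal (Real.exp (-(s * t))) ≤ ENNReal.ofReal s⁻¹ := by
  have hint : IntegrableOn (fun t => Real.exp (-s * t)) (Ioi 0) :=
    integrableOn_exp_mul_Ioi (neg_lt_zero.mpr hs) 0
  calc ∫⁻ t in Ioc 0 T, ENNReal.ofReal (Real.exp (-(s * t)))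
      ≤ ∫⁻ t in Ioi 0, ENNReal.ofReal (Real.exp (-s * t)) := by
        simp only [neg_mul]; exact lintegral_mono_set Ioc_subset_Ioi_self
    _ = ENNReal.ofReal s⁻¹ := by
        rw [← ofReal_integral_eq_lintegral_ofReal hint
          (ae_of_all _ fun t => (Real.exp_pos _).le), integral_exp_mul_Ioi (neg_lt_zero.mpr hs)]
        simp

theorem lintegral_Ioc_exp_neg_mul_le_of_nonneg {s : ℝ} (hs : 0 ≤ s) (T : ℝ) :
    ∫⁻ t in Ioc 0 T, ENNReal.ofReal (Real.exp (-(s * t))) ≤ ENNReal.ofReal T := by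
  calc ∫⁻ t in Ioc 0 T, ENNReal.ofReal (Real.exp (-(s * t)))
      ≤ ∫⁻ _ in Ioc 0 T, 1 := setLIntegral_mono measurable_const fun t ht =>
        ENNReal.ofReal_le_one.mpr (Real.exp_le_one_iff.mpr (by nlinarith [ht.1]))
    _ = ENNReal.ofReal T := by simp

theorem lintegral_Ioc_exp_neg_mul_le {s : ℝ} (hs : 0 ≤ s) (T : ℝ) :
    ∫⁻ t in Ioc 0 T, ENNReal.ofReal (Real.exp (-(s * t)))
      ≤ ENNReal.ofReal (max T 1 * (max 1 s)⁻¹) := by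
  rcases le_or_gt s 1 with hs1 | hs1
  · refine (lintegral_Ioc_exp_neg_mul_le_of_nonneg hs T).trans (ENNReal.ofReal_le_ofReal ?_)
    simp [max_eq_left hs1]
  · refine (lintegral_Ioc_exp_neg_mul_le_inv (by linarith) T).trans
      (ENNReal.ofReal_le_ofReal ?_)
    rw [max_eq_right hs1.le]
    exact le_mul_of_one_le_left (by positivity) (le_max_right _ _)

theorem ofReal_mul_exp_neg_le_lintegral_Ioc {s τ T : ℝ} (hs : 0 ≤ s) (hτT : τ ≤ T) :
    ENNReal.ofReal (τ * Real.exp (-(s * τ)))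
      ≤ ∫⁻ t in Ioc 0 T, ENNReal.ofReal (Real.exp (-(s * t))) := by
  calc ENNReal.ofReal (τ * Real.exp (-(s * τ)))
      = ∫⁻ _ in Ioc 0 τ, ENNReal.ofReal (Real.exp (-(s * τ))) := by
        rw [setLIntegral_const, Real.volume_Ioc, sub_zero, mul_comm,
          ENNReal.ofReal_mul (Real.exp_pos _).le]
    _ ≤ ∫⁻ t in Ioc 0 τ, ENNReal.ofReal (Real.exp (-(s * t))) :=
        setLIntegral_mono (by fun_prop) fun t ht =>
          ENNReal.ofReal_le_ofReal (Real.exp_le_exp.mpr (by nlinarith [ht.2]))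
    _ ≤ ∫⁻ t in Ioc 0 T, ENNReal.ofReal (Real.exp (-(s * t))) :=
        lintegral_mono_set (Ioc_subset_Ioc_right hτT)

theorem ofReal_le_lintegral_Ioc_exp_neg_mul {s T : ℝ} (hs : 0 ≤ s) (hT : 0 ≤ T) :
    ENNReal.ofReal (Real.exp (-1) * min T 1 * (max 1 s)⁻¹)
      ≤ ∫⁻ t in Ioc 0 T, ENNReal.ofReal (Real.exp (-(s * t))) := by
  set τ := min T 1 * (max 1 s)⁻¹
  have hτT : τ ≤ T := (mul_le_of_le_one_right (by positivity)
    (inv_le_one_of_one_le₀ (le_max_left _ _))).trans (min_le_left _ _)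
  have hsτ : s * τ ≤ 1 := by
    calc s * τ = min T 1 * (s / max 1 s) := by simp only [τ]; ring
      _ ≤ 1 * 1 := by
          gcongr
          · exact min_le_right _ _
          · exact div_le_one_of_le₀ (le_max_right _ _) (by positivity)
      _ = 1 := one_mul 1
  refine le_trans (ENNReal.ofReal_le_ofReal ?_) (ofReal_mul_exp_neg_le_lintegral_Ioc hs hτT)
  rw [mul_assoc, mul_comm]
  gcongr

theorem inv_max_one_mul_inv_max_one_le {x s M : ℝ} (hx : 0 ≤ x) (hs : s ≤ M * x) :
    (max 1 M)⁻¹ * (max 1 x)⁻¹ ≤ (max 1 s)⁻¹ := by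
  rw [← mul_inv]
  refine inv_anti₀ (by positivity) (max_le_max le_rfl hs |>.trans (max_le ?_ ?_))
  · exact one_le_mul_of_one_le_of_one_le (le_max_left _ _) (le_max_left _ _)
  · exact mul_le_mul (le_max_right _ _) (le_max_right _ _) hx (by positivity)

theorem inv_max_one_le_inv_min_one_mul {x s m : ℝ} (hx : 0 ≤ x) (hm : 0 < m) (hs : m * x ≤ s) :
    (max 1 s)⁻¹ ≤ (min 1 m)⁻¹ * (max 1 x)⁻¹ := by
  rw [← mul_inv]
  refine inv_anti₀ (by positivity) ?_
  rw [mul_max_of_nonneg _ _ (by positivity), mul_one]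
  exact max_le_max (min_le_left _ _) ((mul_le_mul_of_nonneg_right (min_le_right _ _) hx).trans hs)

theorem max_one_rpow_neg {r γ : ℝ} (hr : 0 ≤ r) (hγ : 0 ≤ γ) :
    max 1 r ^ (-γ) = (max 1 (r ^ γ))⁻¹ := by
  rw [Real.rpow_neg (by positivity),
    (Real.monotoneOn_rpow_Ici_of_exponent_nonneg hγ).map_max (by simp) (by simpa using hr),
    Real.one_rpow]

namespace MvPolynomial.IsHomogeneous

section CommSemiring

variable {R σ : Type*} [CommSemiring R] {φ : MvPolynomial σ R} {n : ℕ}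

theorem eval_smul (hφ : φ.IsHomogeneous n) (c : R) (x : σ → R) :
    eval (c • x) φ = c ^ n * eval x φ := by
  rw [eval_eq, eval_eq, Finset.mul_sum]
  refine Finset.sum_congr rfl fun m hm => ?_
  simp only [Pi.smul_apply, smul_eq_mul, mul_pow, Finset.prod_mul_distrib,
    Finset.prod_pow_eq_pow_sum, ← hφ.degree_eq_sum_deg_support hm]
  ring

theorem eval_zero (hφ : φ.IsHomogeneous n) (hn : n ≠ 0) : eval 0 φ = 0 := by
  simpa [zero_pow hn] using hφ.eval_smul 0 0

end CommSemiring

section NormedField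

variable {K ι : Type*} [NormedField K] [Fintype ι] {φ : MvPolynomial ι K} {n : ℕ}

theorem exists_norm_eval_eq_pow_mul (hφ : φ.IsHomogeneous n) {x : ι → K} (hx : x ≠ 0) :
    ∃ y ∈ Metric.sphere (0 : ι → K) 1, ‖eval x φ‖ = ‖x‖ ^ n * ‖eval y φ‖ := by
  have : Nonempty ι := (Function.ne_iff.mp hx).nonempty
  obtain ⟨j, hj : ‖x j‖ = ‖x‖⟩ := (IsGreatest.pi_norm x).1
  have hx' : ‖x‖ ≠ 0 := norm_ne_zero_iff.mpr hx
  refine ⟨(x j)⁻¹ • x, ?_, ?_⟩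
  · rw [mem_sphere_zero_iff_norm, norm_smul, norm_inv, hj, inv_mul_cancel₀ hx']
  · rw [hφ.eval_smul, norm_mul, norm_pow, norm_inv, hj, ← mul_assoc, ← mul_pow,
      mul_inv_cancel₀ hx', one_pow, one_mul]

variable [ProperSpace K]

theorem exists_norm_eval_le (hφ : φ.IsHomogeneous n) (hn : n ≠ 0) :
    ∃ C ≥ 0, ∀ x : ι → K, ‖eval x φ‖ ≤ C * ‖x‖ ^ n := by
  obtain ⟨C, hC⟩ := (isCompact_sphere (0 : ι → K) 1).exists_bound_of_continuousOn
    (continuous_eval φ).continuousOn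
  refine ⟨max C 0, le_max_right _ _, fun x => ?_⟩
  rcases eq_or_ne x 0 with rfl | hx
  · rw [hφ.eval_zero hn]; simp [zero_pow hn]
  obtain ⟨y, hy, hxy⟩ := hφ.exists_norm_eval_eq_pow_mul hx
  rw [hxy, mul_comm]
  exact mul_le_mul_of_nonneg_right ((hC y hy).trans (le_max_left _ _)) (by positivity)

theorem exists_pos_mul_le_norm_eval (hφ : φ.IsHomogeneous n) (hn : n ≠ 0)
    (hφ₀ : ∀ x, eval x φ = 0 → x = 0) :
    ∃ c > 0, ∀ x : ι → K, c * ‖x‖ ^ n ≤ ‖eval x φ‖ := by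
  obtain ⟨c, hc, hcle⟩ := (isCompact_sphere (0 : ι → K) 1).exists_forall_le'
    (continuous_eval φ).norm.continuousOn (a := 0) fun y hy => norm_pos_iff.mpr fun h => by
      simp [hφ₀ y h] at hy
  refine ⟨c, hc, fun x => ?_⟩
  rcases eq_or_ne x 0 with rfl | hx
  · simp [zero_pow hn]
  obtain ⟨y, hy, hxy⟩ := hφ.exists_norm_eval_eq_pow_mul hx
  rw [hxy, mul_comm]
  exact mul_le_mul_of_nonneg_left (hcle y hy) (by positivity)

end NormedField

end MvPolynomial.IsHomogeneous

theorem IsElliptic.exists_rpow_bounds {p : ℕ} [Fact p.Prime] {N d : ℕ}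
    {a : MvPolynomial (Fin N) ℤ_[p]} (ha : IsElliptic p N a d) {β : ℝ} (hβ : 0 ≤ β) :
    ∃ m > 0, ∃ M, ∀ ξ : Fin N → ℚ_[p],
      m * ‖ξ‖ ^ ((d : ℝ) * β) ≤ ‖evalPoly p N a ξ‖ ^ β ∧
        ‖evalPoly p N a ξ‖ ^ β ≤ M * ‖ξ‖ ^ ((d : ℝ) * β) := by
  have hP := ha.2.1.map (PadicInt.Coe.ringHom (p := p))
  obtain ⟨c, hc, hlow⟩ := hP.exists_pos_mul_le_norm_eval ha.1.ne' fun ξ h => (ha.2.2 ξ).mp h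
  obtain ⟨C, hC, hup⟩ := hP.exists_norm_eval_le ha.1.ne'
  refine ⟨c ^ β, by positivity, C ^ β, fun ξ => ?_⟩
  rw [Real.rpow_mul (norm_nonneg _), Real.rpow_natCast, ← Real.mul_rpow hc.le (by positivity),
    ← Real.mul_rpow hC (by positivity)]
  exact ⟨Real.rpow_le_rpow (by positivity) (hlow ξ) hβ,
    Real.rpow_le_rpow (norm_nonneg _) (hup ξ) hβ⟩

@[fun_prop]
theorem measurable_evalPoly {p : ℕ} [Fact p.Prime] {N : ℕ} (a : MvPolynomial (Fin N) ℤ_[p]) :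
    Measurable (evalPoly p N a) :=
  (MvPolynomial.continuous_eval _).measurable

/-- `∫₀^T ∫ e^{-2t|a(ξ)|_p^β} dμ(ξ) dt < ∞` iff
`∫ max(1,‖ξ‖_p)^{-dβ} dμ(ξ) < ∞`. -/
theorem heat_fourier_square_integrable_iff {p : ℕ} [Fact p.Prime] {N d : ℕ}
    (a : MvPolynomial (Fin N) ℤ_[p]) (ha : IsElliptic p N a d)
    (β T : ℝ) (hβ : 0 < β) (hT : 0 < T)
    (μ : Measure (Fin N → ℚ_[p])) [μ.Regular] :
    (∫⁻ t in Set.Ioc (0 : ℝ) T,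
        ∫⁻ ξ, ENNReal.ofReal (Real.exp (-(2 * t * ‖evalPoly p N a ξ‖ ^ β))) ∂μ < ⊤) ↔
    (∫⁻ ξ, ENNReal.ofReal ((max 1 ‖ξ‖ : ℝ) ^ (-((d : ℝ) * β))) ∂μ < ⊤) := by
  obtain ⟨m, hm, M, hbounds⟩ := ha.exists_rpow_bounds hβ.le
  rw [lintegral_lintegral_swap (by fun_prop)]
  refine lintegral_lt_top_iff_of_le_mul
    (c := ENNReal.ofReal (Real.exp (-1) * min T 1 * (max 1 (2 * M))⁻¹))
    (C := ENNReal.ofReal (max T 1 * (min 1 (2 * m))⁻¹))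
    (by positivity) ENNReal.ofReal_ne_top (fun ξ => ?_) (fun ξ => ?_) <;>
  -- the time integrand becomes `exp (-(s * t))` with `s = 2 |a(ξ)|_p ^ β`
  simp only [mul_right_comm 2 _ (‖evalPoly p N a ξ‖ ^ β)] <;>
  rw [max_one_rpow_neg (norm_nonneg ξ) (by positivity), ← ENNReal.ofReal_mul (by positivity)]
  · refine le_trans (ENNReal.ofReal_le_ofReal ?_)
      (ofReal_le_lintegral_Ioc_exp_neg_mul (by positivity) hT.le)
    rw [mul_assoc]
    gcongr
    exact inv_max_one_mul_inv_max_one_le (by positivity) (by linarith [(hbounds ξ).2])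
  · refine (lintegral_Ioc_exp_neg_mul_le (by positivity) T).trans (ENNReal.ofReal_le_ofReal ?_)
    rw [mul_assoc]
    gcongr
    exact inv_max_one_le_inv_min_one_mul (by positivity) (by positivity)
      (by linarith [(hbounds ξ).1])
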